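/- For every integer n ≥ 1, every natural number m, and every real x ∈ [0, 2], one has f_n(x + 2m) = −u_m · f_n(x). -/

import Mathlib

/-- The ±1 Thue–Morse sequence: `u n = (-1)^(s₂(n)+1)` where `s₂` is the binary digit sum. -/
def u (n : ℕ) : ℤ := (-1) ^ ((Nat.digits 2 n).sum + 1)

/-- The "Pascal triangle" associated to the Thue–Morse sequence:
`Sig k n` is `Σ^k_n` (k the superscript, n the subscript). -/
def Sig : ℕ → ℕ → ℤ
  | k, 0 => u k
  | 0, _ + 1 => 0
  | k + 1, n + 1 => Sig k n + Sig k (n + 1)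

/-- The renormalized points `x^k_n = 2^{-(n-1)(n-2)/2} Σ^k_n`. -/
noncomputable def xkn (n k : ℕ) : ℝ := (Sig k n : ℝ) / 2 ^ ((n - 1) * (n - 2) / 2)

/-- The piecewise linear interpolation `f n` of the points `x^k_n` at `k/2^{n-1}`,
vanishing on the nonpositive reals. -/
noncomputable def f (n : ℕ) (x : ℝ) : ℝ :=
  if x ≤ 0 then 0
  else
    xkn n ⌊(2 : ℝ) ^ (n - 1) * x⌋₊ +
      (2 : ℝ) ^ (n - 1) * (x - (⌊(2 : ℝ) ^ (n - 1) * x⌋₊ : ℝ) / 2 ^ (n - 1)) *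
        (xkn n (⌊(2 : ℝ) ^ (n - 1) * x⌋₊ + 1) - xkn n ⌊(2 : ℝ) ^ (n - 1) * x⌋₊)

/-!
`Σ^·_{n+1}` is the sequence of partial sums of `Σ^·_n`. Call `s` twisted periodic with period `p`
if `s (k + m p) = -u m * s k` for `k < p`. Since `u (2m+1) = -u (2m)`, such an `s` sums to zero
over every block `[2mp, 2(m+1)p)`, so its partial sums are twisted periodic with period `2p`.
Starting from `Σ^k_0 = u k` (period `1`), `Σ^·_n` has period `2^n`. As `f_n` interpolates the
points `x^k_n` linearly on the grid `2^{-(n-1)} ℕ`, translating by `2m` shifts `k` by `m 2^n`,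
and on `[0, 2]` only the indices `k ≤ 2^n` are involved.
-/

lemma u_zero : u 0 = -1 := by simp [u]

lemma u_two_mul (i : ℕ) : u (2 * i) = u i := by
  rcases Nat.eq_zero_or_pos i with rfl | hi
  · rfl
  · rw [u, Nat.digits_def' (by norm_num) (by positivity)]
    simp [u]

lemma u_two_mul_add_one (i : ℕ) : u (2 * i + 1) = -u i := by
  rw [u, Nat.digits_def' (by norm_num) (by positivity)]
  simp [u, Nat.mul_add_div, pow_succ, pow_add]

lemma u_one : u 1 = 1 := by
  simpa [u_zero] using u_two_mul_add_one 0

lemma Sig_zero_succ (n : ℕ) : Sig 0 (n + 1) = 0 := rfl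

lemma Sig_succ_eq_sum (k n : ℕ) : Sig k (n + 1) = ∑ j ∈ Finset.range k, Sig j n := by
  induction k with
  | zero => rfl
  | succ k ih => rw [Sig, ih, Finset.sum_range_succ, add_comm]

def IsTwistedPeriodic (s : ℕ → ℤ) (p : ℕ) : Prop :=
  ∀ m k, k < p → s (k + m * p) = -u m * s k

namespace IsTwistedPeriodic

variable {s : ℕ → ℤ} {p : ℕ}

theorem two_mul (h : IsTwistedPeriodic s p) : IsTwistedPeriodic s (2 * p) := by
  intro m k hk
  rcases lt_or_ge k p with hkp | hkp
  · rw [show k + m * (2 * p) = k + (2 * m) * p by ring, h _ _ hkp, u_two_mul]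
  · obtain ⟨j, rfl⟩ := Nat.exists_eq_add_of_le' hkp
    have hj : j < p := by omega
    rw [show j + p + m * (2 * p) = j + (2 * m + 1) * p by ring, h _ _ hj,
      u_two_mul_add_one, show j + p = j + 1 * p by ring, h _ _ hj, u_one]
    ring

theorem sum_range_two_mul (h : IsTwistedPeriodic s p) : ∑ i ∈ Finset.range (2 * p), s i = 0 := by
  rw [_root_.two_mul, Finset.sum_range_add]
  have hshift : ∀ i ∈ Finset.range p, s (p + i) = -u 1 * s i := fun i hi => by
    rw [add_comm]
    simpa using h 1 i (Finset.mem_range.mp hi)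
  rw [Finset.sum_congr rfl hshift, ← Finset.mul_sum, u_one]
  ring

theorem sum_range_mul_two_mul (h : IsTwistedPeriodic s p) (m : ℕ) :
    ∑ i ∈ Finset.range (m * (2 * p)), s i = 0 := by
  induction m with
  | zero => simp
  | succ m ih =>
    rw [add_mul, one_mul, Finset.sum_range_add, ih, zero_add]
    simp_rw [add_comm (m * (2 * p))]
    rw [Finset.sum_congr rfl fun i hi => h.two_mul m i (Finset.mem_range.mp hi), ← Finset.mul_sum,
      h.sum_range_two_mul, mul_zero]

theorem partialSums (h : IsTwistedPeriodic s p) :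
    IsTwistedPeriodic (fun k => ∑ i ∈ Finset.range k, s i) (2 * p) := by
  intro m k hk
  dsimp only
  have hs : ∀ i < k, s (i + m * (2 * p)) = -u m * s i := fun i hi => h.two_mul m i (by omega)
  rw [add_comm, Finset.sum_range_add, h.sum_range_mul_two_mul, zero_add, Finset.mul_sum]
  exact Finset.sum_congr rfl fun i hi => by rw [add_comm, hs i (Finset.mem_range.mp hi)]

theorem add_mul_of_le (h : IsTwistedPeriodic s p) (h0 : s 0 = 0) (m : ℕ) {k : ℕ} (hk : k ≤ p) :
    s (k + m * p) = -u m * s k := by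
  rcases hk.lt_or_eq with hk | rfl
  · exact h m k hk
  rcases Nat.eq_zero_or_pos k with rfl | hk
  · simp [h0]
  rw [show k + m * k = 0 + (m + 1) * k by ring, h _ _ hk, show k = 0 + 1 * k by ring, h _ _ hk, h0]
  ring

end IsTwistedPeriodic

theorem Sig_isTwistedPeriodic (n : ℕ) : IsTwistedPeriodic (fun k => Sig k n) (2 ^ n) := by
  induction n with
  | zero =>
    intro m k hk
    obtain rfl : k = 0 := by simpa using hk
    simp [Sig, u_zero]
  | succ n ih =>
    simp_rw [Sig_succ_eq_sum, pow_succ']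
    exact ih.partialSums

theorem xkn_zero (n : ℕ) : xkn (n + 1) 0 = 0 := by
  simp [xkn, Sig_zero_succ]

theorem xkn_add_mul_two_pow {n k : ℕ} (m : ℕ) (hk : k ≤ 2 ^ (n + 1)) :
    xkn (n + 1) (k + m * 2 ^ (n + 1)) = -u m * xkn (n + 1) k := by
  rw [xkn, xkn, (Sig_isTwistedPeriodic (n + 1)).add_mul_of_le (Sig_zero_succ n) m hk]
  push_cast
  ring

noncomputable def piecewiseLinear (g : ℕ → ℝ) (t : ℝ) : ℝ :=
  g ⌊t⌋₊ + (t - ⌊t⌋₊) * (g (⌊t⌋₊ + 1) - g ⌊t⌋₊)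

section piecewiseLinear

variable {g g' : ℕ → ℝ} {t : ℝ}

theorem piecewiseLinear_add_natCast (ht : 0 ≤ t) (q : ℕ) :
    piecewiseLinear g (t + q) = piecewiseLinear (fun k => g (k + q)) t := by
  simp only [piecewiseLinear, Nat.floor_add_natCast ht, Nat.cast_add, add_right_comm _ q 1]
  ring

theorem piecewiseLinear_const_mul (c : ℝ) :
    piecewiseLinear (fun k => c * g k) t = c * piecewiseLinear g t := by
  simp only [piecewiseLinear]
  ring

theorem piecewiseLinear_congr {P : ℕ} (h : ∀ k ≤ P, g k = g' k) (ht0 : 0 ≤ t) (htP : t ≤ P) :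
    piecewiseLinear g t = piecewiseLinear g' t := by
  have hfloor : ⌊t⌋₊ ≤ P := Nat.floor_le_of_le htP
  rcases hfloor.lt_or_eq with hlt | heq
  · simp only [piecewiseLinear, h _ hfloor, h _ hlt]
  · -- the endpoint `t = P`, where the slope towards `g (P + 1)` is multiplied by `0`
    have hfrac : t - ⌊t⌋₊ = 0 := by
      have := Nat.floor_le ht0
      rw [heq] at this ⊢
      linarith
    simp only [piecewiseLinear, hfrac, zero_mul, add_zero, h _ hfloor]

end piecewiseLinear

theorem f_eq_piecewiseLinear (N : ℕ) {y : ℝ} (hy : 0 ≤ y) :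
    f (N + 1) y = piecewiseLinear (xkn (N + 1)) (2 ^ N * y) := by
  rcases hy.eq_or_lt with rfl | hy
  · simp [f, piecewiseLinear, xkn_zero]
  have h2N : (2 : ℝ) ^ N ≠ 0 := by positivity
  rw [f, if_neg hy.not_ge, Nat.add_sub_cancel, piecewiseLinear, mul_sub ((2 : ℝ) ^ N) y,
    mul_div_cancel₀ _ h2N]

theorem f_translation (n : ℕ) (hn : 1 ≤ n) (m : ℕ) (x : ℝ) (hx : x ∈ Set.Icc (0 : ℝ) 2) :
    f n (x + 2 * m) = -(u m : ℝ) * f n x := by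
  obtain ⟨N, rfl⟩ := Nat.exists_eq_add_of_le' hn
  obtain ⟨hx0, hx2⟩ := hx
  have hscale : (2 : ℝ) ^ N * (x + 2 * m) = 2 ^ N * x + (m * 2 ^ (N + 1) : ℕ) := by
    push_cast
    ring
  have hbound : (2 : ℝ) ^ N * x ≤ (2 ^ (N + 1) : ℕ) := by
    push_cast
    rw [pow_succ]
    gcongr
  rw [f_eq_piecewiseLinear N (by positivity), f_eq_piecewiseLinear N hx0, hscale,
    piecewiseLinear_add_natCast (by positivity), ← piecewiseLinear_const_mul]
  exact piecewiseLinear_congr (fun k hk => xkn_add_mul_two_pow m hk) (by positivity) hbound
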